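/- For any spin vector s ∈ {-1,1}^{Nα}, setting w = (1/2) Mᵀ(s + U), the Markowitz utility satisfies wᵀμ - (γ/2) wᵀ Σ w = -[(1/2) E_Ising(J, h, s) + f(U)], where J = -(γ/2) M Σ Mᵀ, h = (γ/2) M Σ Mᵀ U - Mμ, E_Ising(J,h,s) = -(1/2) sᵀ J s + sᵀ h, and f(U) = (γ/8) Uᵀ M Σ Mᵀ U - (1/2) Uᵀ M μ. -/
import Mathlib


open Matrix

/-- The block binary-encoding matrix `M ∈ ℝ^{(Nα)×N}`. -/
noncomputable def encodingMatrix (N α : ℕ) : Matrix (Fin (N * α)) (Fin N) ℝ :=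
  fun k l => if (l : ℕ) * α ≤ (k : ℕ) ∧ (k : ℕ) < (l : ℕ) * α + α
    then 2 ^ ((k : ℕ) - (l : ℕ) * α) else 0

/-- The Ising energy `E(J,h,s) = -(1/2) sᵀ J s + sᵀ h`. -/
noncomputable def isingEnergy {n : ℕ} (J : Matrix (Fin n) (Fin n) ℝ) (h s : Fin n → ℝ) : ℝ :=
  -(1 / 2) * (s ⬝ᵥ J.mulVec s) + s ⬝ᵥ h

/-- For any spin vector `s ∈ {-1,1}^{Nα}`, with `w = (1/2) Mᵀ (s + U)`,
`wᵀμ - (γ/2) wᵀ Σ w = -[(1/2) E_Ising(J,h,s) + f(U)]` where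
`J = -(γ/2) M Σ Mᵀ`, `h = (γ/2) M Σ Mᵀ U - Mμ` and
`f(U) = (γ/8) Uᵀ M Σ Mᵀ U - (1/2) Uᵀ M μ`. -/
theorem markowitz_ising_identity (N α : ℕ) (hN : 0 < N) (hα : 0 < α)
    (μ : Fin N → ℝ) (S : Matrix (Fin N) (Fin N) ℝ) (hS : S.IsSymm) (γ : ℝ)
    (s : Fin (N * α) → ℝ) (hs : ∀ k, s k = -1 ∨ s k = 1)
    (M : Matrix (Fin (N * α)) (Fin N) ℝ) (hM : M = encodingMatrix N α)
    (U : Fin (N * α) → ℝ) (hU : U = fun _ => 1)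
    (J : Matrix (Fin (N * α)) (Fin (N * α)) ℝ) (hJ : J = (-(γ / 2)) • (M * S * Mᵀ))
    (h : Fin (N * α) → ℝ) (hh : h = (γ / 2) • (M * S * Mᵀ).mulVec U - M.mulVec μ)
    (w : Fin N → ℝ) (hw : w = (1 / 2 : ℝ) • Mᵀ.mulVec (s + U)) :
    w ⬝ᵥ μ - (γ / 2) * (w ⬝ᵥ S.mulVec w) =
      -((1 / 2) * isingEnergy J h s +
        ((γ / 8) * (U ⬝ᵥ (M * S * Mᵀ).mulVec U) - (1 / 2) * (U ⬝ᵥ M.mulVec μ))) := by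
  subst hJ hh hw
  set A := M * S * Mᵀ with hA
  have hAsymm : Aᵀ = A := by
    rw [hA, transpose_mul, transpose_mul, transpose_transpose, hS.eq, Matrix.mul_assoc]
  have hw' : ∀ v u : Fin (N * α) → ℝ, Mᵀ.mulVec v ⬝ᵥ S.mulVec (Mᵀ.mulVec u)
      = v ⬝ᵥ A.mulVec u := by
    intro v u
    calc Mᵀ *ᵥ v ⬝ᵥ S *ᵥ (Mᵀ *ᵥ u) = v ᵥ* M ⬝ᵥ S *ᵥ (Mᵀ *ᵥ u) := by rw [mulVec_transpose]
      _ = v ⬝ᵥ M *ᵥ (S *ᵥ (Mᵀ *ᵥ u)) := (dotProduct_mulVec _ _ _).symm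
      _ = v ⬝ᵥ A *ᵥ u := by rw [mulVec_mulVec, mulVec_mulVec, hA]
  have key : U ⬝ᵥ A.mulVec s = s ⬝ᵥ A.mulVec U := by
    conv_lhs => rw [← hAsymm]
    rw [mulVec_transpose, dotProduct_comm, ← dotProduct_mulVec]
  have key2 : ∀ v : Fin (N * α) → ℝ, Mᵀ.mulVec v ⬝ᵥ μ = v ⬝ᵥ M.mulVec μ := by
    intro v
    rw [mulVec_transpose, ← dotProduct_mulVec]
  simp only [isingEnergy, smul_mulVec, dotProduct_smul, smul_eq_mul,
    dotProduct_sub, mulVec_add, mulVec_smul, dotProduct_add, add_dotProduct, hw', key, key2,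
    smul_dotProduct]
  ring
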